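/- arXiv:2505.15569 — 6 statements merged into one kernel-verified Lean document; each statement's English description precedes it below -/
import Mathlib

section
/- For every a ∈ ι, τ(e a ⊗ e a) = −(e a ⊗ e a); and for all a,b ∈ ι with a < b, τ(e a ⊗ e b + e b ⊗ e a) = −(e a ⊗ e b + e b ⊗ e a) and τ(e a ⊗ e b − p·(e b ⊗ e a)) = p·(e a ⊗ e b − p·(e b ⊗ e a)). In particular the vectors e a ⊗ e a and e a ⊗ e b + e b ⊗ e a (a < b) are eigenvectors of τ with eigenvalue −1, and the vectors e a ⊗ e b − p·(e b ⊗ e a) (a < b) are eigenvectors with eigenvalue p. -/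
open scoped TensorProduct

/-- Heaviside theta symbol: `theta a b = 1` if `a > b`, else `0`. -/
def theta {ι : Type*} [LinearOrder ι] (a b : ι) : ℕ := if b < a then 1 else 0

section theta

variable {ι : Type*} [LinearOrder ι] {a b : ι}

theorem theta_of_lt (h : b < a) : theta a b = 1 := if_pos h

theorem theta_of_le (h : a ≤ b) : theta a b = 0 := if_neg h.not_gt

end theta

/-- The vectors `e a ⊗ e a` and `e a ⊗ e b + e b ⊗ e a` (for `a < b`) are eigenvectors of `τ`
with eigenvalue `−1`, and the vectors `e a ⊗ e b − p·(e b ⊗ e a)` (for `a < b`) are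
eigenvectors of `τ` with eigenvalue `p`. -/
theorem tau_eigenvectors (F : Type*) [Field F] (p : F) (ι : Type*) [LinearOrder ι]
    (τ : ((ι →₀ F) ⊗[F] (ι →₀ F)) →ₗ[F] ((ι →₀ F) ⊗[F] (ι →₀ F)))
    (hτ : ∀ a b : ι,
      τ (Finsupp.single a 1 ⊗ₜ[F] Finsupp.single b 1) =
        (p ^ theta a b - 1) • (Finsupp.single a 1 ⊗ₜ[F] Finsupp.single b 1)
          - p ^ theta b a • (Finsupp.single b 1 ⊗ₜ[F] Finsupp.single a 1)) :
    (∀ a : ι,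
      τ (Finsupp.single a 1 ⊗ₜ[F] Finsupp.single a 1) =
        -(Finsupp.single a 1 ⊗ₜ[F] Finsupp.single a (1 : F))) ∧
    (∀ a b : ι, a < b →
      τ (Finsupp.single a 1 ⊗ₜ[F] Finsupp.single b 1
          + Finsupp.single b 1 ⊗ₜ[F] Finsupp.single a 1) =
        -(Finsupp.single a 1 ⊗ₜ[F] Finsupp.single b 1
          + Finsupp.single b 1 ⊗ₜ[F] Finsupp.single a (1 : F))) ∧
    (∀ a b : ι, a < b →
      τ (Finsupp.single a 1 ⊗ₜ[F] Finsupp.single b 1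
          - p • (Finsupp.single b 1 ⊗ₜ[F] Finsupp.single a 1)) =
        p • (Finsupp.single a 1 ⊗ₜ[F] Finsupp.single b 1
          - p • (Finsupp.single b 1 ⊗ₜ[F] Finsupp.single a (1 : F)))) := by
  set e : ι → ι →₀ F := fun i => Finsupp.single i 1
  have τ_lt : ∀ a b, a < b → τ (e a ⊗ₜ e b) = -(p • (e b ⊗ₜ e a)) := fun a b h => by
    rw [hτ, theta_of_le h.le, theta_of_lt h]
    module
  have τ_gt : ∀ a b, a < b → τ (e b ⊗ₜ e a) = (p - 1) • (e b ⊗ₜ e a) - e a ⊗ₜ e b :=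
    fun a b h => by
      rw [hτ, theta_of_le h.le, theta_of_lt h]
      module
  refine ⟨fun a => ?_, fun a b h => ?_, fun a b h => ?_⟩
  · rw [hτ, theta_of_le le_rfl]
    module
  · rw [map_add, τ_lt a b h, τ_gt a b h]
    module
  · rw [map_sub, map_smul, τ_lt a b h, τ_gt a b h]
    module
end

section
/- Let R be a commutative ring, p ∈ R, and let E be a finite subset of a linearly ordered type ι with |E| = n. Then for every 0 ≤ k ≤ n, Σ_{A ⊆ E, |A| = k} p^{θ(A, E∖A)} = [n choose k]_p, and likewise Σ_{A ⊆ E, |A| = k} p^{θ(E∖A, A)} = [n choose k]_p. -/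
/-- Heaviside theta symbol for finite sets: the number of pairs `(a, b) ∈ A × B` with `a > b`. -/
def Theta {ι : Type*} [LinearOrder ι] (A B : Finset ι) : ℕ :=
  ∑ a ∈ A, ∑ b ∈ B, if b < a then 1 else 0

/-- Gaussian (q-)binomial coefficient `[n choose k]_p`, determined by
`[n choose 0]_p = 1`, `[0 choose k+1]_p = 0`, and
`[n+1 choose k+1]_p = [n choose k+1]_p + p^{n−k}·[n choose k]_p`. -/
def qbinom {R : Type*} [CommRing R] (p : R) : ℕ → ℕ → R
  | _, 0 => 1
  | 0, _ + 1 => 0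
  | n + 1, k + 1 => qbinom p n (k + 1) + p ^ (n - k) * qbinom p n k

/-!
Split the `k`-subsets of `insert a s`, with `a` larger than every element of `s`, according to
whether they contain `a`. A subset `A ⊆ s` gains no inversion from `a`, which lies in its
complement, while `insert a A` gains one inversion against each of the `#s - k` elements of
`s \ A`: this is exactly the recursion defining `qbinom`. The second identity is the first one
for the reversed order.
-/

open Finset

theorem Finset.sum_powersetCard_succ_insert {α M : Type*} [DecidableEq α] [AddCommMonoid M]
    {s : Finset α} {a : α} (ha : a ∉ s) (k : ℕ) (f : Finset α → M) :
    ∑ A ∈ (insert a s).powersetCard (k + 1), f A =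
      ∑ A ∈ s.powersetCard (k + 1), f A + ∑ A ∈ s.powersetCard k, f (insert a A) := by
  have hinj : Set.InjOn (insert a) (s.powersetCard k : Set (Finset α)) := fun A hA B hB hAB => by
    rw [← erase_insert (notMem_mono (mem_powersetCard.1 hA).1 ha),
      ← erase_insert (notMem_mono (mem_powersetCard.1 hB).1 ha), hAB]
  have hdisj : Disjoint (s.powersetCard (k + 1)) ((s.powersetCard k).image (insert a)) := by
    refine disjoint_left.2 fun A hA hA' => ?_
    obtain ⟨B, -, rfl⟩ := mem_image.1 hA'
    exact ha ((mem_powersetCard.1 hA).1 (mem_insert_self a B))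
  rw [powersetCard_succ_insert ha, sum_union hdisj, sum_image hinj]

section Theta

variable {ι : Type*} [LinearOrder ι]

theorem Theta_empty_left (B : Finset ι) : Theta ∅ B = 0 := by
  simp [Theta]

theorem Theta_insert_right_of_le {A B : Finset ι} {a : ι} (ha : a ∉ B) (hA : ∀ x ∈ A, x ≤ a) :
    Theta A (insert a B) = Theta A B :=
  sum_congr rfl fun x hx => by rw [sum_insert ha, if_neg (not_lt.2 (hA x hx)), zero_add]

theorem Theta_insert_left_of_lt {A B : Finset ι} {a : ι} (ha : a ∉ A) (hB : ∀ x ∈ B, x < a) :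
    Theta (insert a A) B = Theta A B + #B := by
  rw [Theta, sum_insert ha, sum_congr rfl fun x hx => if_pos (hB x hx), add_comm]
  simp [Theta]

theorem Theta_orderDual (A B : Finset ι) : Theta (ι := ιᵒᵈ) A B = Theta B A :=
  sum_comm

variable {R : Type*} [CommRing R] (p : R)

theorem sum_powersetCard_pow_Theta_sdiff_eq_qbinom (E : Finset ι) (k : ℕ) :
    ∑ A ∈ E.powersetCard k, p ^ Theta A (E \ A) = qbinom p #E k := by
  induction E using Finset.induction_on_max generalizing k with
  | empty =>
    cases k with
    | zero => simp [qbinom, Theta_empty_left]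
    | succ k => rw [powersetCard_eq_empty.2 (by simp)]; simp [qbinom]
  | insert a s hs ih =>
    have ha : a ∉ s := fun h => lt_irrefl a (hs a h)
    cases k with
    | zero => simp [qbinom, Theta_empty_left]
    | succ k =>
      have without_a : ∀ A ∈ s.powersetCard (k + 1),
          p ^ Theta A (insert a s \ A) = p ^ Theta A (s \ A) := fun A hA => by
        have hAs := (mem_powersetCard.1 hA).1
        rw [insert_sdiff_of_notMem _ (notMem_mono hAs ha),
          Theta_insert_right_of_le (notMem_mono sdiff_subset ha) fun x hx => (hs x (hAs hx)).le]
      have with_a : ∀ A ∈ s.powersetCard k,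
          p ^ Theta (insert a A) (insert a s \ insert a A) =
            p ^ (#s - k) * p ^ Theta A (s \ A) := fun A hA => by
        obtain ⟨hAs, hAk⟩ := mem_powersetCard.1 hA
        rw [insert_sdiff_insert, sdiff_insert_of_notMem ha,
          Theta_insert_left_of_lt (notMem_mono hAs ha) fun x hx => hs x (sdiff_subset hx),
          card_sdiff_of_subset hAs, hAk, pow_add, mul_comm]
      rw [sum_powersetCard_succ_insert ha, sum_congr rfl without_a, sum_congr rfl with_a,
        ← mul_sum, ih, ih, card_insert_of_notMem ha, qbinom]

end Theta

theorem sum_pow_Theta_eq_qbinom_general (R : Type*) [CommRing R] (p : R)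
    (ι : Type*) [LinearOrder ι] (E : Finset ι) (n k : ℕ) (hE : E.card = n) :
    (∑ A ∈ E.powersetCard k, p ^ Theta A (E \ A)) = qbinom p n k ∧
    (∑ A ∈ E.powersetCard k, p ^ Theta (E \ A) A) = qbinom p n k := by
  subst hE
  refine ⟨sum_powersetCard_pow_Theta_sdiff_eq_qbinom p E k, ?_⟩
  refine Eq.trans ?_ (sum_powersetCard_pow_Theta_sdiff_eq_qbinom (ι := ιᵒᵈ) p E k)
  exact sum_congr rfl fun A _ => congrArg (p ^ ·) (Theta_orderDual (ι := ι) A (E \ A)).symm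

/-- For `|E| = n` and `k ≤ n`, `Σ_{A ⊆ E, |A| = k} p^{θ(A, E∖A)} = [n choose k]_p`, and
likewise with `θ(E∖A, A)`. -/
theorem sum_pow_Theta_eq_qbinom (R : Type*) [CommRing R] (p : R)
    (ι : Type*) [LinearOrder ι] (E : Finset ι) (n k : ℕ) (hE : E.card = n) (hk : k ≤ n) :
    (∑ A ∈ E.powersetCard k, p ^ Theta A (E \ A)) = qbinom p n k ∧
    (∑ A ∈ E.powersetCard k, p ^ Theta (E \ A) A) = qbinom p n k :=
  sum_pow_Theta_eq_qbinom_general R p ι E n k hE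
end

section
/- Let F be a field and p ∈ F with p ≠ 0 and p^n ≠ 1 for every positive integer n. Then for all natural numbers i, j: Σ_{k=0}^{i} Σ_{l=0}^{j} [i choose k]_p · ((p^{i−j−k}; p)_l / (p;p)_l) · (−1)^k · p^{k(k−1)/2} · p^l equals 1 if i = j and 0 otherwise, where p^{i−j−k} denotes the integer power of p (i−j−k may be negative). -/
/-- q-Pochhammer symbol `(x; p)_n = Π_{s=0}^{n−1} (1 − x·p^s)`. -/
def qpoch {R : Type*} [CommRing R] (x p : R) (n : ℕ) : R :=
  ∏ s ∈ Finset.range n, (1 - x * p ^ s)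


section CommRing

variable {R : Type*} [CommRing R] (p : R)

lemma qbinom_zero_right (n : ℕ) : qbinom p n 0 = 1 := by cases n <;> rfl

lemma qbinom_succ_succ (n k : ℕ) :
    qbinom p (n + 1) (k + 1) = qbinom p n (k + 1) + p ^ (n - k) * qbinom p n k := rfl

lemma qbinom_of_lt {n k : ℕ} (h : n < k) : qbinom p n k = 0 := by
  induction n generalizing k with
  | zero => obtain ⟨k, rfl⟩ := Nat.exists_eq_succ_of_ne_zero h.ne'; rfl
  | succ n ih =>
    obtain ⟨k, rfl⟩ := Nat.exists_eq_succ_of_ne_zero (by omega : k ≠ 0)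
    rw [qbinom_succ_succ, ih (by omega), ih (by omega), mul_zero, add_zero]

lemma qbinom_self (n : ℕ) : qbinom p n n = 1 := by
  induction n with
  | zero => rfl
  | succ n ih => rw [qbinom_succ_succ, qbinom_of_lt p n.lt_succ_self, ih, Nat.sub_self]; ring

lemma pow_sub_mul_qbinom_mul_pow (n k : ℕ) :
    p ^ (n - k) * qbinom p n k * p ^ k = p ^ n * qbinom p n k := by
  rcases le_or_gt k n with h | h
  · rw [mul_right_comm, ← pow_add, Nat.sub_add_cancel h]
  · simp [qbinom_of_lt p h]

lemma qpoch_zero (x : R) : qpoch x p 0 = 1 := Finset.prod_range_zero _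

lemma qpoch_succ (x : R) (n : ℕ) : qpoch x p (n + 1) = qpoch x p n * (1 - x * p ^ n) :=
  Finset.prod_range_succ _ n

lemma qpoch_succ' (x : R) (n : ℕ) : qpoch x p (n + 1) = (1 - x) * qpoch (x * p) p n := by
  simp only [qpoch, Finset.prod_range_succ', pow_zero, mul_one, pow_succ', mul_assoc,
    mul_comm _ (1 - x)]

lemma qpoch_add (x : R) (m n : ℕ) : qpoch x p (m + n) = qpoch x p m * qpoch (x * p ^ m) p n := by
  simp only [qpoch, Finset.prod_range_add, pow_add, mul_assoc]

lemma qbinom_mul_qpoch_mul_qpoch {n k : ℕ} (hk : k ≤ n) :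
    qbinom p n k * qpoch p p k * qpoch p p (n - k) = qpoch p p n := by
  induction n generalizing k with
  | zero =>
    obtain rfl : k = 0 := by omega
    simp [qbinom_zero_right, qpoch_zero]
  | succ n ih =>
    rcases k with _ | k
    · simp [qbinom_zero_right, qpoch_zero]
    rcases (Nat.le_of_lt_succ hk).eq_or_lt with rfl | hlt
    · simp [qbinom_self, qpoch_zero]
    obtain ⟨d, rfl⟩ : ∃ d, n = k + 1 + d := ⟨n - (k + 1), by omega⟩
    have h₁ := ih (k := k + 1) hlt
    have h₂ := ih (k := k) (by omega)
    rw [show k + 1 + d - (k + 1) = d by omega] at h₁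
    rw [show k + 1 + d - k = d + 1 by omega, qpoch_succ p p d] at h₂
    rw [show k + 1 + d + 1 - (k + 1) = d + 1 by omega, qbinom_succ_succ,
      show k + 1 + d - k = d + 1 by omega, qpoch_succ p p d, qpoch_succ p p (k + 1 + d)]
    rw [qpoch_succ p p k] at h₁ ⊢
    linear_combination (1 - p * p ^ d) * h₁ + p ^ (d + 1) * (1 - p * p ^ k) * h₂

lemma qpoch_one (n : ℕ) : qpoch 1 p n = if n = 0 then 1 else 0 := by
  split_ifs with h
  · rw [h, qpoch_zero]
  · exact Finset.prod_eq_zero (Finset.mem_range.mpr (Nat.pos_of_ne_zero h)) (by simp)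

theorem sum_qbinom_mul_pow_eq_qpoch (x : R) {m N : ℕ} (h : m < N) :
    ∑ k ∈ Finset.range N, qbinom p m k * ((-1) ^ k * p ^ (k * (k - 1) / 2)) * x ^ k =
      qpoch x p m := by
  induction m generalizing N with
  | zero =>
    rw [Finset.sum_eq_single_of_mem 0 (Finset.mem_range.mpr h)]
    · simp [qbinom_zero_right, qpoch_zero]
    · intro k _ hk
      rw [qbinom_of_lt p (Nat.pos_of_ne_zero hk), zero_mul, zero_mul]
  | succ m ih =>
    obtain ⟨N, rfl⟩ : ∃ N', N = N' + 1 := ⟨N - 1, by omega⟩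
    have pascal (k : ℕ) :
        qbinom p (m + 1) (k + 1) * ((-1) ^ (k + 1) * p ^ ((k + 1) * (k + 1 - 1) / 2)) *
            x ^ (k + 1) =
          qbinom p m (k + 1) * ((-1) ^ (k + 1) * p ^ ((k + 1) * (k + 1 - 1) / 2)) * x ^ (k + 1) -
            x * p ^ m * (qbinom p m k * ((-1) ^ k * p ^ (k * (k - 1) / 2)) * x ^ k) := by
      rw [qbinom_succ_succ, Nat.triangle_succ]
      linear_combination (-1) ^ (k + 1) * p ^ (k * (k - 1) / 2) * x ^ (k + 1) *
        pow_sub_mul_qbinom_mul_pow p m k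
    have shifted := ih (N := N + 1) (by omega)
    rw [Finset.sum_range_succ'] at shifted
    rw [Finset.sum_range_succ', Finset.sum_congr rfl fun k _ => pascal k, Finset.sum_sub_distrib,
      ← Finset.mul_sum, ih (by omega), qpoch_succ]
    simp only [qbinom_zero_right, pow_zero, zero_mul, Nat.zero_div, mul_one] at shifted ⊢
    linear_combination shifted

end CommRing

section Field

variable {F : Type*} [Field F] {p : F}

lemma qpoch_self_ne_zero (hp : ∀ n : ℕ, 0 < n → p ^ n ≠ 1) (n : ℕ) :
    qpoch p p n ≠ 0 := by
  refine Finset.prod_ne_zero_iff.mpr fun s _ h => hp (s + 1) s.succ_pos ?_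
  rw [pow_succ']
  exact (sub_eq_zero.mp h).symm

theorem sum_qpoch_div_qpoch_mul_pow (hp : ∀ n : ℕ, 0 < n → p ^ n ≠ 1) (x : F) (j : ℕ) :
    ∑ l ∈ Finset.range (j + 1), qpoch x p l / qpoch p p l * p ^ l =
      qpoch (x * p) p j / qpoch p p j := by
  induction j with
  | zero => simp [qpoch_zero]
  | succ j ih =>
    have h₁ := qpoch_self_ne_zero hp j
    have h₂ : 1 - p * p ^ j ≠ 0 := by
      have := qpoch_self_ne_zero hp (j + 1)
      rw [qpoch_succ] at this
      exact right_ne_zero_of_mul this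
    rw [Finset.sum_range_succ, ih, qpoch_succ' p x, qpoch_succ p (x * p) j, qpoch_succ p p j]
    field_simp
    ring

lemma qpoch_zpow_div_qpoch_eq_qbinom (hp0 : p ≠ 0) (hp : ∀ n : ℕ, 0 < n → p ^ n ≠ 1)
    (n j : ℕ) :
    qpoch (p ^ ((n : ℤ) - j + 1)) p j / qpoch p p j = qbinom p n j := by
  rw [div_eq_iff (qpoch_self_ne_zero hp j)]
  rcases le_or_gt j n with h | h
  · have hsplit := qpoch_add p p (n - j) j
    rw [Nat.sub_add_cancel h, ← qbinom_mul_qpoch_mul_qpoch p h, mul_comm p, ← pow_succ]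
      at hsplit
    have hpow : p ^ ((n : ℤ) - j + 1) = p ^ (n - j + 1) := by
      rw [← zpow_natCast]
      congr 1
      omega
    rw [hpow]
    exact mul_left_cancel₀ (qpoch_self_ne_zero hp (n - j)) (by linear_combination -hsplit)
  · rw [qbinom_of_lt p h, zero_mul]
    refine Finset.prod_eq_zero (Finset.mem_range.mpr (show j - n - 1 < j by omega)) ?_
    rw [← zpow_natCast, ← zpow_add₀ hp0,
      show (n : ℤ) - j + 1 + ((j - n - 1 : ℕ) : ℤ) = 0 by omega, zpow_zero, sub_self]

lemma sum_qpoch_zpow_div_qpoch_mul_pow (hp0 : p ≠ 0) (hp : ∀ n : ℕ, 0 < n → p ^ n ≠ 1)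
    {i k : ℕ} (j : ℕ) (hk : k ≤ i) :
    ∑ l ∈ Finset.range (j + 1), qpoch (p ^ ((i : ℤ) - j - k)) p l / qpoch p p l * p ^ l =
      qbinom p (i - k) j := by
  have hx : p ^ ((i : ℤ) - j - k) * p = p ^ (((i - k : ℕ) : ℤ) - j + 1) := by
    rw [← zpow_add_one₀ hp0]
    congr 1
    omega
  rw [sum_qpoch_div_qpoch_mul_pow hp, hx, qpoch_zpow_div_qpoch_eq_qbinom hp0 hp]

lemma qbinom_mul_qbinom_sub (hp : ∀ n : ℕ, 0 < n → p ^ n ≠ 1) {i k : ℕ} (j : ℕ)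
    (hk : k ≤ i) :
    qbinom p i k * qbinom p (i - k) j = qbinom p i j * qbinom p (i - j) k := by
  by_cases hkj : k + j ≤ i
  · have hN := mul_ne_zero (mul_ne_zero (qpoch_self_ne_zero hp k) (qpoch_self_ne_zero hp j))
      (qpoch_self_ne_zero hp (i - k - j))
    refine mul_right_cancel₀ hN ?_
    have lhs := qbinom_mul_qpoch_mul_qpoch p (show j ≤ i - k by omega)
    have rhs := qbinom_mul_qpoch_mul_qpoch p (show k ≤ i - j by omega)
    rw [show i - j - k = i - k - j by omega] at rhs
    calc qbinom p i k * qbinom p (i - k) j * (qpoch p p k * qpoch p p j * qpoch p p (i - k - j))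
        = qbinom p i k * qpoch p p k * qpoch p p (i - k) := by rw [← lhs]; ring
      _ = qbinom p i j * qpoch p p j * qpoch p p (i - j) := by
        rw [qbinom_mul_qpoch_mul_qpoch p hk, qbinom_mul_qpoch_mul_qpoch p (by omega)]
      _ = _ := by rw [← rhs]; ring
  · rw [qbinom_of_lt p (show i - k < j by omega), mul_zero]
    rcases le_or_gt j i with h | h
    · rw [qbinom_of_lt p (show i - j < k by omega), mul_zero]
    · rw [qbinom_of_lt p h, zero_mul]

end Field

/-- The summation formula
`Σ_{k=0}^{i} Σ_{l=0}^{j} [i choose k]_p ((p^{i−j−k};p)_l/(p;p)_l) (−1)^k p^{k(k−1)/2} p^l = δ_{i,j}`,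
for `p` neither zero nor a root of unity. -/
theorem delta_summation_formula (F : Type*) [Field F] (p : F) (hp0 : p ≠ 0)
    (hp : ∀ n : ℕ, 0 < n → p ^ n ≠ 1) (i j : ℕ) :
    (∑ k ∈ Finset.range (i + 1), ∑ l ∈ Finset.range (j + 1),
        qbinom p i k * (qpoch (p ^ ((i : ℤ) - (j : ℤ) - (k : ℤ))) p l / qpoch p p l) *
          ((-1 : F) ^ k * p ^ (k * (k - 1) / 2)) * p ^ l) =
      if i = j then 1 else 0 := by
  have inner : ∀ k ∈ Finset.range (i + 1),
      ∑ l ∈ Finset.range (j + 1), qbinom p i k *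
          (qpoch (p ^ ((i : ℤ) - (j : ℤ) - (k : ℤ))) p l / qpoch p p l) *
          ((-1 : F) ^ k * p ^ (k * (k - 1) / 2)) * p ^ l =
        qbinom p i j * (qbinom p (i - j) k * ((-1 : F) ^ k * p ^ (k * (k - 1) / 2))) := by
    intro k hk
    have hki : k ≤ i := Nat.lt_succ_iff.mp (Finset.mem_range.mp hk)
    rw [← mul_assoc, ← qbinom_mul_qbinom_sub hp j hki,
      ← sum_qpoch_zpow_div_qpoch_mul_pow hp0 hp j hki, Finset.mul_sum, Finset.sum_mul]
    exact Finset.sum_congr rfl fun _ _ => by ring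
  rw [Finset.sum_congr rfl inner, ← Finset.mul_sum]
  rcases lt_or_ge i j with hij | hji
  · rw [qbinom_of_lt p hij, zero_mul, if_neg hij.ne]
  · have rothe := sum_qbinom_mul_pow_eq_qpoch p (1 : F) (show i - j < i + 1 by omega)
    simp only [one_pow, mul_one, qpoch_one] at rothe
    rw [rothe]
    by_cases hij : i = j
    · simp [hij, qbinom_self]
    · simp [hij, show i - j ≠ 0 by omega]
end

section
/- The linear map Δ is coassociative: (Δ ⊗ id_M) ∘ Δ = (id_M ⊗ Δ) ∘ Δ as linear maps M → M ⊗ M ⊗ M. -/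
open scoped TensorProduct

set_option maxSynthPendingDepth 2

/-!
Both sides send `f_E` to a sum over the decompositions `E = X ⊔ Y ⊔ Z` of a power of `-p` times
`f_X ⊗ f_Y ⊗ f_Z`, the two sums being matched by `(A, B) ↦ (B, A \ B)`. The exponents agree
because `θ` is additive in each argument under disjoint unions, so both equal
`θ(X, Y) + θ(X, Z) + θ(Y, Z)`.
-/

namespace Theta

variable {ι : Type*} [LinearOrder ι] {A B C : Finset ι}

lemma union_left (h : Disjoint A B) : Theta (A ∪ B) C = Theta A C + Theta B C :=
  Finset.sum_union h

lemma union_right (h : Disjoint B C) : Theta A (B ∪ C) = Theta A B + Theta A C := by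
  simp only [Theta, ← Finset.sum_add_distrib]
  exact Finset.sum_congr rfl fun _ _ => Finset.sum_union h

lemma union_left_add (hAB : Disjoint A B) (hBC : Disjoint B C) :
    Theta (A ∪ B) C + Theta A B = Theta A (B ∪ C) + Theta B C := by
  rw [union_left hAB, union_right hBC]
  ring

end Theta

open Finset in
lemma Finset.sum_powerset_powerset_eq {ι M : Type*} [DecidableEq ι] [AddCommMonoid M]
    (E : Finset ι) (g : Finset ι → Finset ι → M) :
    ∑ A ∈ E.powerset, ∑ B ∈ A.powerset, g A B =
      ∑ B ∈ E.powerset, ∑ C ∈ (E \ B).powerset, g (B ∪ C) B := by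
  rw [sum_sigma', sum_sigma']
  refine sum_bij' (fun x _ => ⟨x.2, x.1 \ x.2⟩) (fun y _ => ⟨y.1 ∪ y.2, y.1⟩) ?_ ?_ ?_ ?_ ?_ <;>
    rintro ⟨A, B⟩ h <;> simp only [mem_sigma, mem_powerset] at h ⊢
  · exact ⟨h.2.trans h.1, sdiff_subset_sdiff h.1 le_rfl⟩
  · exact ⟨union_subset h.1 (h.2.trans sdiff_subset), subset_union_left⟩
  · simp [union_sdiff_of_subset h.2]
  · simp [union_sdiff_cancel_left (disjoint_sdiff.mono_right h.2)]
  · simp [union_sdiff_of_subset h.2]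

/-- Coassociativity of the coproduct `Δ f_E = Σ_{A ⊆ E} (−p)^{θ(A,E∖A)} f_A ⊗ f_{E∖A}`:
`(Δ ⊗ id) ∘ Δ = (id ⊗ Δ) ∘ Δ` (compared via the canonical associator). -/
theorem coproduct_coassoc (F : Type*) [Field F] (p : F) (ι : Type*) [LinearOrder ι]
    (Δ : (Finset ι →₀ F) →ₗ[F] (Finset ι →₀ F) ⊗[F] (Finset ι →₀ F))
    (hΔ : ∀ E : Finset ι,
      Δ (Finsupp.single E 1) =
        ∑ A ∈ E.powerset, (-p) ^ Theta A (E \ A) •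
          (Finsupp.single A (1 : F) ⊗ₜ[F] Finsupp.single (E \ A) (1 : F))) :
    (TensorProduct.assoc F (Finset ι →₀ F) (Finset ι →₀ F) (Finset ι →₀ F)).toLinearMap ∘ₗ
        LinearMap.rTensor (Finset ι →₀ F) Δ ∘ₗ Δ =
      LinearMap.lTensor (Finset ι →₀ F) Δ ∘ₗ Δ := by
  refine Finsupp.basisSingleOne.ext fun E => ?_
  simp only [Finsupp.coe_basisSingleOne, LinearMap.comp_apply, hΔ, map_sum, map_smul,
    LinearMap.rTensor_tmul, LinearMap.lTensor_tmul, LinearEquiv.coe_coe, TensorProduct.sum_tmul,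
    TensorProduct.tmul_sum, TensorProduct.smul_tmul, TensorProduct.tmul_smul, Finset.smul_sum,
    TensorProduct.assoc_tmul, smul_smul, ← pow_add]
  rw [Finset.sum_powerset_powerset_eq]
  refine Finset.sum_congr rfl fun B _ => Finset.sum_congr rfl fun C hC => ?_
  have hBC : Disjoint B C := Finset.disjoint_sdiff.mono_right (Finset.mem_powerset.1 hC)
  have hCZ : C ∪ (E \ B) \ C = E \ B := Finset.union_sdiff_of_subset (Finset.mem_powerset.1 hC)
  have hZ : E \ (B ∪ C) = (E \ B) \ C := sdiff_sdiff_left.symm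
  rw [Finset.union_sdiff_cancel_left hBC, hZ,
    Theta.union_left_add hBC Finset.disjoint_sdiff, hCZ]
end

section
/- For every finite subset E of ι, the following hold in Λ(V): Σ_{A ⊆ E} (−p)^{θ(A, E∖A)} · (−1)^{|A|} p^{|A|(|A|−1)/2} · f_A * f_{E∖A} = 1 if E = ∅ and = 0 otherwise; and likewise Σ_{A ⊆ E} (−p)^{θ(A, E∖A)} · (−1)^{|E∖A|} p^{|E∖A|(|E∖A|−1)/2} · f_A * f_{E∖A} = 1 if E = ∅ and = 0 otherwise. (These are the two antipode axioms ∇(S⊗id)Δ = ηε = ∇(id⊗S)Δ for the braided Hopf algebra Λ_p(V) with the antipode S f_E = (−1)^{|E|} p^{|E|(|E|−1)/2} f_E, written out in the set-theoretic basis.) -/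
/-- The set-theoretic basis element `f_E` of the exterior algebra: the product of the
generators `ι(e b)`, `b ∈ E`, taken in increasing order. -/
noncomputable def fSet (F : Type*) [Field F] {ι : Type*} [LinearOrder ι] (E : Finset ι) :
    ExteriorAlgebra F (ι →₀ F) :=
  ((E.sort (· ≤ ·)).map fun b => ExteriorAlgebra.ι F (Finsupp.single b 1)).prod

open Finset

section Theta

variable {ι : Type*} [LinearOrder ι]

theorem theta_eq_sum_card_filter_lt (A B : Finset ι) :
    Theta A B = ∑ a ∈ A, #{b ∈ B | b < a} :=
  sum_congr rfl fun _ _ => (card_filter _ _).symm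

theorem theta_eq_sum_card_filter_gt (A B : Finset ι) :
    Theta A B = ∑ b ∈ B, #{a ∈ A | b < a} := by
  rw [Theta, sum_comm]
  exact sum_congr rfl fun _ _ => (card_filter _ _).symm

theorem theta_union_left {A B : Finset ι} (h : Disjoint A B) (C : Finset ι) :
    Theta (A ∪ B) C = Theta A C + Theta B C :=
  sum_union h

theorem theta_union_right (A : Finset ι) {B C : Finset ι} (h : Disjoint B C) :
    Theta A (B ∪ C) = Theta A B + Theta A C := by
  simp only [Theta, ← sum_add_distrib, sum_union h]

theorem two_mul_theta_self (A : Finset ι) : 2 * Theta A A = #A * (#A - 1) := by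
  have hpair (a b : ι) :
      ((if b < a then 1 else 0) + if a < b then 1 else 0) = if b ≠ a then 1 else 0 := by
    rcases lt_trichotomy a b with h | rfl | h
    · simp [h, h.not_gt, h.ne']
    · simp
    · simp [h, h.not_gt, h.ne]
  calc 2 * Theta A A
      = ∑ a ∈ A, ∑ b ∈ A, ((if b < a then 1 else 0) + if a < b then 1 else 0) := by
        conv_lhs => rw [two_mul]; arg 2; rw [Theta, sum_comm]
        simp only [Theta, ← sum_add_distrib]
    _ = ∑ a ∈ A, #(A.erase a) := by
        refine sum_congr rfl fun a _ => ?_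
        simp only [hpair, sum_boole, filter_ne', Nat.cast_id]
    _ = #A * (#A - 1) := by
        rw [sum_congr rfl fun a ha => card_erase_of_mem ha, sum_const, smul_eq_mul]

theorem theta_self (A : Finset ι) : Theta A A = #A * (#A - 1) / 2 := by
  have := two_mul_theta_self A
  omega

end Theta

section AlternatingSums

variable {R : Type*} [CommRing R] {ι : Type*} [LinearOrder ι]

theorem sum_powerset_neg_one_pow_card_mul_pow_theta (p : R) {E : Finset ι} (hE : E.Nonempty) :
    ∑ A ∈ E.powerset, (-1) ^ #A * p ^ Theta A E = 0 := by
  have hprod := prod_sub 1 (fun a => p ^ #{b ∈ E | b < a}) E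
  simp only [Pi.one_apply, prod_const_one, mul_one, prod_pow_eq_pow_sum,
    ← theta_eq_sum_card_filter_lt] at hprod
  rw [← hprod]
  refine prod_eq_zero (E.min'_mem hE) ?_
  rw [filter_false_of_mem fun b hb => (E.min'_le b hb).not_gt, card_empty, pow_zero, sub_self]

theorem sum_powerset_neg_one_pow_card_sdiff_mul_pow_theta (p : R) {E : Finset ι}
    (hE : E.Nonempty) :
    ∑ A ∈ E.powerset, (-1) ^ #(E \ A) * p ^ Theta E (E \ A) = 0 := by
  have hprod := prod_add 1 (fun b => -p ^ #{a ∈ E | b < a}) E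
  simp only [Pi.one_apply, prod_const_one, one_mul, prod_neg, prod_pow_eq_pow_sum,
    ← theta_eq_sum_card_filter_gt] at hprod
  rw [← hprod]
  refine prod_eq_zero (E.max'_mem hE) ?_
  rw [filter_false_of_mem fun a ha => (E.le_max' a ha).not_gt, card_empty, pow_zero,
    add_neg_cancel]

end AlternatingSums

section fSet

variable {F : Type*} [Field F] {ι : Type*} [LinearOrder ι]

local notation "e" b => ExteriorAlgebra.ι F (Finsupp.single b (1 : F))

@[simp]
theorem fSet_empty : fSet F (∅ : Finset ι) = 1 := by
  simp [fSet]

theorem fSet_insert_of_forall_lt {a : ι} {C : Finset ι} (h : ∀ c ∈ C, a < c) :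
    fSet F (insert a C) = (e a) * fSet F C := by
  rw [fSet, sort_insert _ (fun c hc => (h c hc).le) fun ha => (h a ha).false,
    List.map_cons, List.prod_cons, fSet]

theorem ι_single_mul_fSet {a : ι} {C : Finset ι} (ha : a ∉ C) :
    (e a) * fSet F C = ((-1 : F) ^ #{c ∈ C | c < a}) • fSet F (insert a C) := by
  induction C using Finset.induction_on_min with
  | empty => simp [fSet]
  | insert m C hm ih =>
    rcases (ne_of_mem_of_not_mem (mem_insert_self m C) ha).lt_or_gt with hma | ham
    · have hmin : ∀ c ∈ insert a C, m < c := by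
        simpa [forall_mem_insert] using ⟨hma, hm⟩
      calc (e a) * fSet F (insert m C)
          = -((e m) * ((e a) * fSet F C)) := by
            rw [fSet_insert_of_forall_lt hm, ← mul_assoc, ← mul_assoc, ← neg_mul,
              CliffordAlgebra.ι_mul_ι_comm_of_isOrtho (.all _ _)]
        _ = ((-1 : F) ^ (#{c ∈ C | c < a} + 1)) • ((e m) * fSet F (insert a C)) := by
            rw [ih fun h => ha (mem_insert_of_mem h), mul_smul_comm, pow_succ, mul_neg_one,
              neg_smul]
        _ = ((-1 : F) ^ #{c ∈ insert m C | c < a}) • fSet F (insert a (insert m C)) := by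
            rw [filter_insert, if_pos hma, card_insert_of_notMem (by simp [(hm m).mt]),
              Finset.insert_comm, fSet_insert_of_forall_lt hmin]
    · have hmin : ∀ c ∈ insert m C, a < c := by
        simpa [forall_mem_insert] using ⟨ham, fun c hc => ham.trans (hm c hc)⟩
      rw [filter_false_of_mem fun c hc => (hmin c hc).not_gt, card_empty, pow_zero, one_smul,
        fSet_insert_of_forall_lt hmin]

theorem fSet_mul_fSet {A B : Finset ι} (h : Disjoint A B) :
    fSet F A * fSet F B = ((-1 : F) ^ Theta A B) • fSet F (A ∪ B) := by
  induction A using Finset.induction_on_min with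
  | empty => simp [Theta]
  | insert m A hm ih =>
    obtain ⟨hmB, hAB⟩ := disjoint_insert_left.1 h
    have hmA : m ∉ A := fun hmA => (hm m hmA).false
    have hlt : #{c ∈ A ∪ B | c < m} = Theta {m} B := by
      rw [filter_union, filter_false_of_mem fun c hc => (hm c hc).not_gt, empty_union,
        theta_eq_sum_card_filter_lt, sum_singleton]
    calc fSet F (insert m A) * fSet F B
        = ((-1 : F) ^ Theta A B) • ((e m) * fSet F (A ∪ B)) := by
          rw [fSet_insert_of_forall_lt hm, mul_assoc, ih hAB, mul_smul_comm]
      _ = ((-1 : F) ^ (Theta {m} B + Theta A B)) • fSet F (insert m A ∪ B) := by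
          rw [ι_single_mul_fSet (by simp [hmA, hmB]), smul_smul, ← pow_add, hlt, add_comm,
            insert_union]
      _ = ((-1 : F) ^ Theta (insert m A) B) • fSet F (insert m A ∪ B) := by
          rw [insert_eq, theta_union_left (disjoint_singleton_left.2 hmA)]

theorem neg_pow_theta_smul_fSet_mul_fSet (p : F) {A B : Finset ι} (h : Disjoint A B) :
    ((-p) ^ Theta A B) • (fSet F A * fSet F B) = (p ^ Theta A B) • fSet F (A ∪ B) := by
  rw [fSet_mul_fSet h, smul_smul, ← mul_pow, neg_mul_neg, mul_one]

end fSet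

/-- The two antipode axioms `∇(S⊗id)Δ = ηε = ∇(id⊗S)Δ` for `Λ_p(V)` with antipode
`S f_E = (−1)^{|E|} p^{|E|(|E|−1)/2} f_E`, written out in the set-theoretic basis. -/
theorem antipode_axioms (F : Type*) [Field F] (p : F) (ι : Type*) [LinearOrder ι]
    (E : Finset ι) :
    (∑ A ∈ E.powerset,
        ((-p) ^ Theta A (E \ A) * (-1 : F) ^ A.card * p ^ (A.card * (A.card - 1) / 2)) •
          (fSet F A * fSet F (E \ A)))
      = (if E = ∅ then 1 else 0) ∧
    (∑ A ∈ E.powerset,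
        ((-p) ^ Theta A (E \ A) * (-1 : F) ^ (E \ A).card *
            p ^ ((E \ A).card * ((E \ A).card - 1) / 2)) •
          (fSet F A * fSet F (E \ A)))
      = (if E = ∅ then 1 else 0) := by
  rcases E.eq_empty_or_nonempty with rfl | hE
  · simp [Theta]
  have hterm {A : Finset ι} (hA : A ∈ E.powerset) (c : F) :
      ((-p) ^ Theta A (E \ A) * c) • (fSet F A * fSet F (E \ A))
        = (c * p ^ Theta A (E \ A)) • fSet F E := by
    rw [mul_comm, ← smul_smul, neg_pow_theta_smul_fSet_mul_fSet p disjoint_sdiff,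
      union_sdiff_of_subset (mem_powerset.1 hA), smul_smul]
  rw [if_neg hE.ne_empty]
  constructor
  · calc _ = ∑ A ∈ E.powerset, ((-1) ^ #A * p ^ Theta A E) • fSet F E :=
          sum_congr rfl fun A hA => by
            rw [mul_assoc, hterm hA, mul_assoc, ← pow_add, ← theta_self,
              ← theta_union_right A disjoint_sdiff, union_sdiff_of_subset (mem_powerset.1 hA)]
      _ = 0 := by
          rw [← sum_smul, sum_powerset_neg_one_pow_card_mul_pow_theta p hE, zero_smul]
  · calc _ = ∑ A ∈ E.powerset, ((-1) ^ #(E \ A) * p ^ Theta E (E \ A)) • fSet F E :=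
          sum_congr rfl fun A hA => by
            rw [mul_assoc, hterm hA, mul_assoc, ← pow_add, ← theta_self,
              ← theta_union_left sdiff_disjoint, sdiff_union_of_subset (mem_powerset.1 hA)]
      _ = 0 := by
          rw [← sum_smul, sum_powerset_neg_one_pow_card_sdiff_mul_pow_theta p hE, zero_smul]
end

section
/- The operators T1, T2, L, R on W satisfy (1 − p)·(R ∘ L − L ∘ R) = T1 − T2. -/
set_option maxSynthPendingDepth 2

/-!
On a basis vector `e_{E,F}`, `R ∘ L` and `L ∘ R` produce the same off-diagonal terms: moving some
`b ∈ F \ E` into `E` and some `a ∈ E \ F` into `F`, in either order, gives the same vector with the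
same sign. So the commutator is diagonal, with eigenvalue
`∑_{x ∈ F \ E} p ^ g x - ∑_{x ∈ E \ F} p ^ g x`, where `g x` counts the elements of `F` below `x` and
of `E` above `x`. Multiplied by `1 - p` this telescopes to `p ^ |E| - p ^ |F|`, by induction on the
largest element of `E ∪ F`.
-/

open Finset

section Theta

variable {ι : Type*} [LinearOrder ι] {A B : Finset ι} {a b : ι}

theorem theta_singleton_left (a : ι) (B : Finset ι) : Theta {a} B = #{b ∈ B | b < a} := by
  rw [Theta, sum_singleton, card_filter]

theorem theta_singleton_right (A : Finset ι) (b : ι) : Theta A {b} = #{a ∈ A | b < a} := by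
  simp only [Theta, sum_singleton, card_filter]

theorem theta_singleton_singleton (a b : ι) : Theta {a} {b} = if b < a then 1 else 0 := by
  simp only [Theta, sum_singleton]

theorem theta_insert_left (ha : a ∉ A) (B : Finset ι) :
    Theta (insert a A) B = Theta {a} B + Theta A B := by
  simp only [Theta, sum_insert ha, sum_singleton]

theorem theta_insert_right (hb : b ∉ B) (A : Finset ι) :
    Theta A (insert b B) = Theta A {b} + Theta A B := by
  simp only [Theta, sum_insert hb, sum_singleton, sum_add_distrib]

theorem theta_erase_left (ha : a ∈ A) (B : Finset ι) :
    Theta A B = Theta {a} B + Theta (A.erase a) B := by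
  rw [← theta_insert_left (notMem_erase a A), insert_erase ha]

theorem theta_erase_right (hb : b ∈ B) (A : Finset ι) :
    Theta A B = Theta A {b} + Theta A (B.erase b) := by
  rw [← theta_insert_right (notMem_erase b B), insert_erase hb]

theorem theta_erase_self_left (A : Finset ι) (a : ι) : Theta (A.erase a) {a} = Theta A {a} := by
  by_cases ha : a ∈ A
  · rw [theta_erase_left ha, theta_singleton_singleton, if_neg (lt_irrefl a), zero_add]
  · rw [erase_eq_of_notMem ha]

theorem theta_erase_self_right (a : ι) (B : Finset ι) : Theta {a} (B.erase a) = Theta {a} B := by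
  by_cases hb : a ∈ B
  · rw [theta_erase_right hb, theta_singleton_singleton, if_neg (lt_irrefl a), zero_add]
  · rw [erase_eq_of_notMem hb]

end Theta

section DiagExponent

variable {ι : Type*} [LinearOrder ι] {E Fs : Finset ι} {m x : ι}

def diagExponent (E Fs : Finset ι) (x : ι) : ℕ := Theta {x} Fs + Theta E {x}

theorem diagExponent_erase_of_lt (hxm : x < m) :
    diagExponent E Fs x = diagExponent (E.erase m) (Fs.erase m) x + if m ∈ E then 1 else 0 := by
  have hF : Theta {x} Fs = Theta {x} (Fs.erase m) := by
    by_cases hm : m ∈ Fs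
    · rw [theta_erase_right hm, theta_singleton_singleton, if_neg hxm.not_gt, zero_add]
    · rw [erase_eq_of_notMem hm]
  have hE : Theta E {x} = Theta (E.erase m) {x} + if m ∈ E then 1 else 0 := by
    split_ifs with hm
    · rw [theta_erase_left hm, theta_singleton_singleton, if_pos hxm, add_comm]
    · rw [erase_eq_of_notMem hm, add_zero]
  rw [diagExponent, diagExponent, hF, hE, add_assoc]

theorem diagExponent_of_forall_le (hm : ∀ y ∈ E ∪ Fs, y ≤ m) :
    diagExponent E Fs m = #(Fs.erase m) := by
  rw [diagExponent, ← theta_erase_self_right, theta_singleton_left, theta_singleton_right,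
    filter_true_of_mem, filter_false_of_mem, card_empty, add_zero]
  · exact fun y hy => (hm y (mem_union_left _ hy)).not_gt
  · exact fun y hy => lt_of_le_of_ne (hm y (mem_union_right _ (mem_of_mem_erase hy)))
      (ne_of_mem_erase hy)

variable {F : Type*} [Field F]

theorem sum_pow_diagExponent_eq_erase_max (p : F) {A : Finset ι} (hA : A ⊆ E ∪ Fs)
    (hm : ∀ y ∈ E ∪ Fs, y ≤ m) :
    ∑ x ∈ A, p ^ diagExponent E Fs x =
      p ^ (if m ∈ E then 1 else 0) * ∑ x ∈ A.erase m, p ^ diagExponent (E.erase m) (Fs.erase m) x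
        + if m ∈ A then p ^ #(Fs.erase m) else 0 := by
  have hrest : ∑ x ∈ A.erase m, p ^ diagExponent E Fs x = p ^ (if m ∈ E then 1 else 0) *
      ∑ x ∈ A.erase m, p ^ diagExponent (E.erase m) (Fs.erase m) x := by
    rw [mul_sum]
    refine sum_congr rfl fun x hx => ?_
    have hxm : x < m := lt_of_le_of_ne (hm x (hA (mem_of_mem_erase hx))) (ne_of_mem_erase hx)
    rw [diagExponent_erase_of_lt hxm, pow_add, mul_comm]
  rw [← hrest]
  split_ifs with hmA
  · rw [← sum_erase_add _ _ hmA, diagExponent_of_forall_le hm]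
  · rw [erase_eq_of_notMem hmA, add_zero]

theorem one_sub_mul_sum_pow_diagExponent (p : F) (E Fs : Finset ι) :
    (1 - p) * (∑ x ∈ Fs, p ^ diagExponent E Fs x - ∑ x ∈ E, p ^ diagExponent E Fs x) =
      p ^ #E - p ^ #Fs := by
  induction hU : E ∪ Fs using Finset.induction_on_max generalizing E Fs with
  | empty => obtain ⟨rfl, rfl⟩ := union_eq_empty.1 hU; simp
  | insert m s hlt ih =>
    have hle : ∀ y ∈ E ∪ Fs, y ≤ m := by
      rw [hU]
      intro y hy
      rcases mem_insert.1 hy with rfl | hy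
      exacts [le_rfl, (hlt y hy).le]
    have hcard : ∀ A : Finset ι, p ^ #A = p ^ #(A.erase m) * p ^ (if m ∈ A then 1 else 0) := by
      intro A
      split_ifs with hm
      · rw [← card_erase_add_one hm, pow_succ, pow_one]
      · rw [erase_eq_of_notMem hm, pow_zero, mul_one]
    have ih' := ih (E.erase m) (Fs.erase m) <| by
      rw [← erase_union_distrib, hU, erase_insert fun h => (hlt m h).false]
    rw [sum_pow_diagExponent_eq_erase_max p subset_union_left hle,
      sum_pow_diagExponent_eq_erase_max p subset_union_right hle, hcard E, hcard Fs]
    by_cases hE : m ∈ E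
    · by_cases hF : m ∈ Fs <;> simp only [hE, hF, if_true, if_false, pow_one, pow_zero] <;>
        linear_combination p * ih'
    · by_cases hF : m ∈ Fs <;> simp only [hE, hF, if_true, if_false, pow_one, pow_zero] <;>
        linear_combination ih'

end DiagExponent

section Operators

variable {F : Type*} [Field F] (p : F) {ι : Type*} [LinearOrder ι]

def coeffL (E Fs : Finset ι) (b : ι) : F := (-p) ^ Theta {b} (Fs \ {b}) * (-1 : F) ^ Theta E {b}

def coeffR (E Fs : Finset ι) (a : ι) : F := (-p) ^ Theta (E \ {a}) {a} * (-1 : F) ^ Theta {a} Fs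

theorem neg_pow_mul_neg_one_pow_mul (m n : ℕ) :
    (-p) ^ m * (-1 : F) ^ n * ((-p) ^ n * (-1 : F) ^ m) = p ^ (m + n) := by
  calc (-p) ^ m * (-1 : F) ^ n * ((-p) ^ n * (-1 : F) ^ m)
      = ((-p) ^ m * (-1 : F) ^ m) * ((-p) ^ n * (-1 : F) ^ n) := by ring
    _ = p ^ (m + n) := by rw [← mul_pow, ← mul_pow, neg_mul_neg, mul_one, pow_add]

theorem coeffL_mul_coeffR_self (E Fs : Finset ι) (b : ι) :
    coeffL p E Fs b * coeffR p (E ∪ {b}) (Fs \ {b}) b = p ^ diagExponent E Fs b := by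
  rw [coeffL, coeffR, union_sdiff_right]
  simp only [sdiff_singleton_eq_erase, theta_erase_self_left, theta_erase_self_right]
  exact neg_pow_mul_neg_one_pow_mul p _ _

theorem coeffR_mul_coeffL_self (E Fs : Finset ι) (a : ι) :
    coeffR p E Fs a * coeffL p (E \ {a}) (Fs ∪ {a}) a = p ^ diagExponent E Fs a := by
  rw [coeffL, coeffR, union_sdiff_right]
  simp only [sdiff_singleton_eq_erase, theta_erase_self_left, theta_erase_self_right]
  rw [diagExponent, add_comm]
  exact neg_pow_mul_neg_one_pow_mul p _ _

theorem coeffL_mul_coeffR_comm {E Fs : Finset ι} {a b : ι} (haE : a ∈ E) (haF : a ∉ Fs)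
    (hbF : b ∈ Fs) (hbE : b ∉ E) :
    coeffL p E Fs b * coeffR p (E ∪ {b}) (Fs \ {b}) a =
      coeffR p E Fs a * coeffL p (E \ {a}) (Fs ∪ {a}) b := by
  simp only [coeffL, coeffR, sdiff_singleton_eq_erase, union_comm _ {_}, ← insert_eq,
    theta_erase_self_left, theta_erase_self_right, theta_insert_left hbE, theta_insert_right haF,
    theta_erase_left haE {b}, theta_erase_right hbF {a}, pow_add]
  ring

variable (L R : ((Finset ι × Finset ι) →₀ F) →ₗ[F] ((Finset ι × Finset ι) →₀ F))

theorem apply_apply_single_RL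
    (hL : ∀ E Fs : Finset ι, L (Finsupp.single (E, Fs) 1) =
      ∑ b ∈ Fs \ E, coeffL p E Fs b • Finsupp.single (E ∪ {b}, Fs \ {b}) 1)
    (hR : ∀ E Fs : Finset ι, R (Finsupp.single (E, Fs) 1) =
      ∑ a ∈ E \ Fs, coeffR p E Fs a • Finsupp.single (E \ {a}, Fs ∪ {a}) 1)
    (E Fs : Finset ι) :
    R (L (Finsupp.single (E, Fs) 1)) =
      (∑ b ∈ Fs \ E, p ^ diagExponent E Fs b) • Finsupp.single (E, Fs) 1 +
        ∑ b ∈ Fs \ E, ∑ a ∈ E \ Fs, (coeffL p E Fs b * coeffR p (E ∪ {b}) (Fs \ {b}) a) •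
          Finsupp.single ((E ∪ {b}) \ {a}, Fs \ {b} ∪ {a}) 1 := by
  rw [hL, map_sum, sum_smul, ← sum_add_distrib]
  refine sum_congr rfl fun b hb => ?_
  obtain ⟨hbF, hbE⟩ := mem_sdiff.1 hb
  have hidx : (E ∪ {b}) \ (Fs \ {b}) = insert b (E \ Fs) := by
    ext y; by_cases hy : y = b <;> simp [hy, hbF]
  rw [map_smul, hR, hidx, sum_insert fun h => (mem_sdiff.1 h).2 hbF, smul_add, smul_smul,
    coeffL_mul_coeffR_self, union_sdiff_cancel_right (disjoint_singleton_right.2 hbE),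
    sdiff_union_of_subset (singleton_subset_iff.2 hbF), smul_sum]
  simp only [smul_smul]

theorem apply_apply_single_LR
    (hL : ∀ E Fs : Finset ι, L (Finsupp.single (E, Fs) 1) =
      ∑ b ∈ Fs \ E, coeffL p E Fs b • Finsupp.single (E ∪ {b}, Fs \ {b}) 1)
    (hR : ∀ E Fs : Finset ι, R (Finsupp.single (E, Fs) 1) =
      ∑ a ∈ E \ Fs, coeffR p E Fs a • Finsupp.single (E \ {a}, Fs ∪ {a}) 1)
    (E Fs : Finset ι) :
    L (R (Finsupp.single (E, Fs) 1)) =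
      (∑ a ∈ E \ Fs, p ^ diagExponent E Fs a) • Finsupp.single (E, Fs) 1 +
        ∑ b ∈ Fs \ E, ∑ a ∈ E \ Fs, (coeffL p E Fs b * coeffR p (E ∪ {b}) (Fs \ {b}) a) •
          Finsupp.single ((E ∪ {b}) \ {a}, Fs \ {b} ∪ {a}) 1 := by
  rw [hR, map_sum, sum_smul, sum_comm, ← sum_add_distrib]
  refine sum_congr rfl fun a ha => ?_
  obtain ⟨haE, haF⟩ := mem_sdiff.1 ha
  have hidx : (Fs ∪ {a}) \ (E \ {a}) = insert a (Fs \ E) := by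
    ext y; by_cases hy : y = a <;> simp [hy, haE]
  rw [map_smul, hL, hidx, sum_insert fun h => (mem_sdiff.1 h).2 haE, smul_add, smul_smul,
    coeffR_mul_coeffL_self, union_sdiff_cancel_right (disjoint_singleton_right.2 haF),
    sdiff_union_of_subset (singleton_subset_iff.2 haE), smul_sum]
  refine congrArg _ (sum_congr rfl fun b hb => ?_)
  obtain ⟨hbF, hbE⟩ := mem_sdiff.1 hb
  have hE' : (E ∪ {b}) \ {a} = E \ {a} ∪ {b} := by grind
  have hF' : Fs \ {b} ∪ {a} = (Fs ∪ {a}) \ {b} := by grind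
  rw [smul_smul, coeffL_mul_coeffR_comm p haE haF hbF hbE, hE', hF']

end Operators

/-- The `sl₂`-type commutation relation `(1 − p)·(R∘L − L∘R) = T1 − T2` for the operators
`T1, T2, L, R` on `W = Λ_p(V) ⊗ Λ_p(V)`, written in the set-theoretic basis. -/
theorem RL_commutator (F : Type*) [Field F] (p : F) (ι : Type*) [LinearOrder ι]
    (T₁ T₂ L R : ((Finset ι × Finset ι) →₀ F) →ₗ[F] ((Finset ι × Finset ι) →₀ F))
    (hT₁ : ∀ E Fs : Finset ι,
      T₁ (Finsupp.single (E, Fs) 1) = p ^ E.card • Finsupp.single (E, Fs) 1)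
    (hT₂ : ∀ E Fs : Finset ι,
      T₂ (Finsupp.single (E, Fs) 1) = p ^ Fs.card • Finsupp.single (E, Fs) 1)
    (hL : ∀ E Fs : Finset ι,
      L (Finsupp.single (E, Fs) 1) =
        ∑ b ∈ Fs \ E, ((-p) ^ Theta {b} (Fs \ {b}) * (-1 : F) ^ Theta E {b}) •
          Finsupp.single (E ∪ {b}, Fs \ {b}) 1)
    (hR : ∀ E Fs : Finset ι,
      R (Finsupp.single (E, Fs) 1) =
        ∑ a ∈ E \ Fs, ((-p) ^ Theta (E \ {a}) {a} * (-1 : F) ^ Theta {a} Fs) •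
          Finsupp.single (E \ {a}, Fs ∪ {a}) 1) :
    (1 - p) • (R ∘ₗ L - L ∘ₗ R) = T₁ - T₂ := by
  refine Finsupp.lhom_ext' fun ⟨E, Fs⟩ => LinearMap.ext_ring ?_
  simp only [LinearMap.comp_apply, Finsupp.lsingle_apply, LinearMap.smul_apply,
    LinearMap.sub_apply, hT₁, hT₂, apply_apply_single_RL p L R hL hR,
    apply_apply_single_LR p L R hL hR]
  rw [add_sub_add_right_eq_sub, ← sub_smul, smul_smul, sum_sdiff_sub_sum_sdiff,
    one_sub_mul_sum_pow_diagExponent, sub_smul]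
end
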